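/- Let A ⊆ ℝ^d be roughly shift-invariant with constant L, N > 2L an integer, P_i = #(A ∩ Q(iN,N)), and p^x_{i,j} = #M^x_{i,j} − #M^x_{j,i} where M^x_{j,i} = Q(jN,N) ∩ σ_{Nx}^{−1}(A ∩ Q((i+x)N,N)). Then for all i, x ∈ ℤ^d: P_{i+x} = P_i − Σ_{j:‖i−j‖_∞=1} p^x_{i,j}. -/

import Mathlib

open Set

/-- The half-open cube `Q(b,r)` in `ℝ^d`. -/
def Qc {d : ℕ} (b : Fin d → ℝ) (r : ℝ) : Set (Fin d → ℝ) :=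
  {y | ∀ j, b j ≤ y j ∧ y j < b j + r}

/-- `A` is discrete: its intersection with any ball is finite. -/
def IsDiscreteSet {d : ℕ} (A : Set (Fin d → ℝ)) : Prop :=
  ∀ (x : Fin d → ℝ) (r : ℝ), (A ∩ Metric.ball x r).Finite

/-- `A` is roughly shift-invariant with constant `L` (sup norm). -/
def RSI {d : ℕ} (A : Set (Fin d → ℝ)) (L : ℝ) : Prop :=
  ∀ x : Fin d → ℝ, ∃ σ : A ≃ A, ∀ a : A, ‖(a : Fin d → ℝ) + x - (σ a : Fin d → ℝ)‖ < L

/-- Neighbors of `i ∈ ℤ^d` in the sup norm: all `j ≠ i` with `‖i-j‖_∞ = 1`. -/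
def nbrs {d : ℕ} (i : Fin d → ℤ) : Finset (Fin d → ℤ) :=
  (Fintype.piFinset (fun k => ({i k - 1, i k, i k + 1} : Finset ℤ))).erase i

/-- `M^x_{j,i}`: points of `A ∩ Q(jN,N)` sent by `σ = σ_{Nx}` into `A ∩ Q((i+x)N,N)`. -/
def Mset {d : ℕ} (A : Set (Fin d → ℝ)) (σ : A ≃ A) (N : ℕ) (x j i : Fin d → ℤ) :
    Set (Fin d → ℝ) :=
  {y | y ∈ Qc (fun k => (N : ℝ) * j k) N ∧
    ∃ h : y ∈ A, ((σ ⟨y, h⟩ : A) : Fin d → ℝ) ∈ Qc (fun k => (N : ℝ) * (i k + x k)) N}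

/-!
The displacement of `σ` differs from `N • x` by less than `L < N` in each coordinate, so a point
of the cube `Q(jN, N)` is sent into a cube `Q((j' + x)N, N)` with `‖j - j'‖_∞ ≤ 1`. Sorting
`A ∩ Q(iN, N)` by the cube its image lands in, and `σ⁻¹(A ∩ Q((i + x)N, N))` by the cube it comes
from, gives `P_i = ∑ⱼ #M^x_{i,j}` and `P_{i+x} = ∑ⱼ #M^x_{j,i}` over `‖i - j‖_∞ ≤ 1`; the terms
`j = i` cancel in the difference.
-/

section Fiberwise

variable {α ι : Type*} [DecidableEq ι]

theorem Set.ncard_eq_sum_ncard_fiberwise {s : Set α} (hs : s.Finite) {f : α → ι}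
    {t : Finset ι} (H : s.MapsTo f t) : s.ncard = ∑ b ∈ t, {a ∈ s | f a = b}.ncard := by
  rw [Set.ncard_eq_toFinset_card s hs, Finset.card_eq_sum_card_fiberwise (by simpa using H)]
  refine Finset.sum_congr rfl fun b _ => ?_
  rw [← Set.ncard_coe_finset]
  congr 1
  ext a
  simp

theorem ncard_fiber_eq_sub_sum_flow (p q : α → ι) {i : ι} {F : Finset ι} (hi : i ∈ F)
    (hp : {a | p a = i}.Finite) (hq : {a | q a = i}.Finite)
    (hpq : ∀ a, p a = i → q a ∈ F) (hqp : ∀ a, q a = i → p a ∈ F) :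
    ({a | q a = i}.ncard : ℤ) = {a | p a = i}.ncard
      - ∑ j ∈ F.erase i, (({a | p a = i ∧ q a = j}.ncard : ℤ) - {a | p a = j ∧ q a = i}.ncard) := by
  have hout := Set.ncard_eq_sum_ncard_fiberwise hp (f := q) (t := F) hpq
  have hin := Set.ncard_eq_sum_ncard_fiberwise hq (f := p) (t := F) hqp
  simp only [Set.sep_ofPred] at hout hin
  simp only [and_comm (a := q _ = i)] at hin
  rw [hout, hin, Finset.sum_sub_distrib, ← Finset.add_sum_erase _ _ hi,
    ← Finset.add_sum_erase _ _ hi]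
  push_cast
  ring

end Fiberwise

section Cubes

variable {d : ℕ}

noncomputable def cubeIndex (N : ℝ) (y : Fin d → ℝ) : Fin d → ℤ := fun k => ⌊y k / N⌋

theorem mem_Qc_iff_cubeIndex_eq {N : ℝ} (hN : 0 < N) {j : Fin d → ℤ} {y : Fin d → ℝ} :
    y ∈ Qc (fun k => N * j k) N ↔ cubeIndex N y = j := by
  simp only [Qc, mem_ofPred_eq, funext_iff, cubeIndex, Int.floor_eq_iff, le_div_iff₀ hN,
    div_lt_iff₀ hN, add_mul, one_mul, mul_comm N]

theorem mem_Qc_add_iff_cubeIndex_sub_eq {N : ℝ} (hN : 0 < N) {i x : Fin d → ℤ}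
    {y : Fin d → ℝ} : y ∈ Qc (fun k => N * (i k + x k)) N ↔ cubeIndex N y - x = i := by
  have := mem_Qc_iff_cubeIndex_eq hN (j := i + x) (y := y)
  simp only [Pi.add_apply, Int.cast_add] at this
  rw [this, sub_eq_iff_eq_add]

theorem abs_floor_div_sub_floor_div_le_one {N a b : ℝ} (hN : 0 < N) (h : |a - b| < N) :
    |⌊a / N⌋ - ⌊b / N⌋| ≤ 1 := by
  have h' : |a / N - b / N| < 1 := by rwa [← sub_div, abs_div, abs_of_pos hN, div_lt_one hN]
  rw [abs_lt] at h'
  have hab : ⌊a / N⌋ < ⌊b / N⌋ + 2 := by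
    have := Int.floor_le (a / N); have := Int.lt_floor_add_one (b / N)
    exact_mod_cast (by linarith : (⌊a / N⌋ : ℝ) < ⌊b / N⌋ + 2)
  have hba : ⌊b / N⌋ < ⌊a / N⌋ + 2 := by
    have := Int.floor_le (b / N); have := Int.lt_floor_add_one (a / N)
    exact_mod_cast (by linarith : (⌊b / N⌋ : ℝ) < ⌊a / N⌋ + 2)
  rw [abs_le]
  omega

theorem abs_cubeIndex_sub_le_one {N : ℝ} (hN : 0 < N) {u v : Fin d → ℝ} (h : ‖u - v‖ < N)
    (k : Fin d) : |cubeIndex N u k - cubeIndex N v k| ≤ 1 :=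
  abs_floor_div_sub_floor_div_le_one hN ((norm_le_pi_norm (u - v) k).trans_lt h)

theorem cubeIndex_add_mul {N : ℝ} (hN : 0 < N) (v : Fin d → ℝ) (x : Fin d → ℤ) :
    cubeIndex N (v + fun k => N * x k) = cubeIndex N v + x := by
  funext k
  simp only [cubeIndex, Pi.add_apply, add_div, mul_div_cancel_left₀ _ hN.ne',
    Int.floor_add_intCast]

theorem mem_piFinset_neighbourhood_iff {i j : Fin d → ℤ} :
    j ∈ Fintype.piFinset (fun k => ({i k - 1, i k, i k + 1} : Finset ℤ)) ↔
      ∀ k, |j k - i k| ≤ 1 := by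
  simp only [Fintype.mem_piFinset, Finset.mem_insert, Finset.mem_singleton, abs_le]
  exact forall_congr' fun k => by omega

theorem finite_inter_Qc {A : Set (Fin d → ℝ)} (hdisc : IsDiscreteSet A) (b : Fin d → ℝ) (r : ℝ) :
    (A ∩ Qc b r).Finite := by
  refine (hdisc b (|r| + 1)).subset fun y ⟨hyA, hyQ⟩ => ⟨hyA, ?_⟩
  rw [Metric.mem_ball, dist_pi_lt_iff (by positivity)]
  intro k
  rw [Real.dist_eq, abs_lt]
  have := hyQ k
  constructor <;> linarith [le_abs_self r, abs_nonneg r]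

end Cubes

section PointSet

variable {d : ℕ} {A : Set (Fin d → ℝ)} {N : ℝ}

theorem inter_Qc_eq_image_cubeIndex (hN : 0 < N) (j : Fin d → ℤ) :
    A ∩ Qc (fun k => N * j k) N = Subtype.val '' {a : A | cubeIndex N a = j} := by
  rw [← Subtype.image_preimage_coe]
  congr 1
  ext a
  exact mem_Qc_iff_cubeIndex_eq hN

theorem finite_setOf_cubeIndex_eq (hdisc : IsDiscreteSet A) (hN : 0 < N) (j : Fin d → ℤ) :
    {a : A | cubeIndex N a = j}.Finite := by
  have := finite_inter_Qc hdisc (fun k => N * j k) N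
  rw [inter_Qc_eq_image_cubeIndex hN] at this
  exact this.of_finite_image Subtype.val_injective.injOn

theorem finite_setOf_cubeIndex_sub_eq (hdisc : IsDiscreteSet A) (hN : 0 < N) (σ : A ≃ A)
    (i x : Fin d → ℤ) : {a : A | cubeIndex N (σ a) - x = i}.Finite :=
  ((finite_setOf_cubeIndex_eq hdisc hN (i + x)).preimage σ.injective.injOn).subset
    fun _ ha => sub_eq_iff_eq_add.1 ha

theorem ncard_inter_Qc_add (hN : 0 < N) (σ : A ≃ A) (i x : Fin d → ℤ) :
    (A ∩ Qc (fun k => N * (i k + x k)) N).ncard = {a : A | cubeIndex N (σ a) - x = i}.ncard := by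
  rw [← Subtype.image_preimage_coe, ncard_image_of_injective _ Subtype.val_injective,
    ← ncard_preimage_of_injective_subset_range σ.injective (by simp)]
  congr 1
  ext a
  exact mem_Qc_add_iff_cubeIndex_sub_eq hN

theorem Mset_eq_image_cubeIndex {N : ℕ} (hN : (0 : ℝ) < N) (σ : A ≃ A) (x j i : Fin d → ℤ) :
    Mset A σ N x j i
      = Subtype.val '' {a : A | cubeIndex N a = j ∧ cubeIndex N (σ a) - x = i} := by
  ext y
  constructor
  · rintro ⟨hyQ, hyA, hσyQ⟩
    exact ⟨⟨y, hyA⟩, ⟨(mem_Qc_iff_cubeIndex_eq hN).1 hyQ,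
      (mem_Qc_add_iff_cubeIndex_sub_eq hN).1 hσyQ⟩, rfl⟩
  · rintro ⟨a, ⟨haQ, hσaQ⟩, rfl⟩
    exact ⟨(mem_Qc_iff_cubeIndex_eq hN).2 haQ, a.2, (mem_Qc_add_iff_cubeIndex_sub_eq hN).2 hσaQ⟩

end PointSet

theorem stmt13_general {d : ℕ} (A : Set (Fin d → ℝ)) (L : ℝ) (N : ℕ) (hN : (N : ℝ) > 2 * L)
    (hdisc : IsDiscreteSet A)
    (x : Fin d → ℤ) (σ : A ≃ A)
    (hσ : ∀ a : A, ‖(a : Fin d → ℝ) + (fun k => (N : ℝ) * x k) - (σ a : Fin d → ℝ)‖ < L) :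
    ∀ i : Fin d → ℤ,
      ((A ∩ Qc (fun k => (N : ℝ) * (i k + x k)) N).ncard : ℤ)
        = ((A ∩ Qc (fun k => (N : ℝ) * i k) N).ncard : ℤ)
          - ∑ j ∈ nbrs i, (((Mset A σ N x i j).ncard : ℤ) - ((Mset A σ N x j i).ncard : ℤ)) := by
  intro i
  obtain hA | ⟨⟨a₀⟩⟩ := isEmpty_or_nonempty A
  · have hM (j j' : Fin d → ℤ) : Mset A σ N x j j' = ∅ :=
      eq_empty_of_forall_notMem fun y hy => hA.false ⟨y, hy.2.1⟩
    simp [isEmpty_coe_sort.1 hA, hM]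
  have hN0 : (0 : ℝ) < N := by linarith [(norm_nonneg _).trans_lt (hσ a₀)]
  have hnear (a : A) (k : Fin d) :
      |cubeIndex N a k - (cubeIndex N (σ a) - x : Fin d → ℤ) k| ≤ 1 := by
    have := abs_cubeIndex_sub_le_one hN0 ((hσ a).trans (by linarith)) k
    rw [cubeIndex_add_mul hN0] at this
    rwa [Pi.add_apply, add_sub_right_comm, sub_add] at this
  simp only [ncard_inter_Qc_add hN0 σ, inter_Qc_eq_image_cubeIndex hN0,
    ncard_image_of_injective _ Subtype.val_injective, Mset_eq_image_cubeIndex hN0]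
  refine ncard_fiber_eq_sub_sum_flow _ _ (mem_piFinset_neighbourhood_iff.2 fun k => by simp)
    (finite_setOf_cubeIndex_eq hdisc hN0 i) (finite_setOf_cubeIndex_sub_eq hdisc hN0 σ i x)
    (fun a ha => ?_) (fun a ha => ?_)
  · exact mem_piFinset_neighbourhood_iff.2 fun k => by
      rw [← ha, abs_sub_comm]; exact hnear a k
  · exact mem_piFinset_neighbourhood_iff.2 fun k => ha ▸ hnear a k

theorem stmt13 {d : ℕ} (A : Set (Fin d → ℝ)) (L : ℝ) (N : ℕ) (hN : (N : ℝ) > 2 * L)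
    (hdisc : IsDiscreteSet A) (hA : RSI A L)
    (x : Fin d → ℤ) (σ : A ≃ A)
    (hσ : ∀ a : A, ‖(a : Fin d → ℝ) + (fun k => (N : ℝ) * x k) - (σ a : Fin d → ℝ)‖ < L) :
    ∀ i : Fin d → ℤ,
      ((A ∩ Qc (fun k => (N : ℝ) * (i k + x k)) N).ncard : ℤ)
        = ((A ∩ Qc (fun k => (N : ℝ) * i k) N).ncard : ℤ)
          - ∑ j ∈ nbrs i, (((Mset A σ N x i j).ncard : ℤ) - ((Mset A σ N x j i).ncard : ℤ)) :=
  stmt13_general A L N hN hdisc x σ hσ
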